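/- Let 0 < α < 1, σ = 1 − α/2, and j ≥ 1. Then the coefficients of the L2-1_σ formula are strictly decreasing: c_0^{(α,σ)} > c_1^{(α,σ)} > c_2^{(α,σ)} > … > c_{j-1}^{(α,σ)} > c_j^{(α,σ)}. -/

import Mathlib

/-- The coefficients `a_l^{(α,σ)}` of the L2-1_σ formula. -/
noncomputable def aCoeff (α σ : ℝ) (l : ℕ) : ℝ :=
  if l = 0 then σ ^ (1 - α)
  else ((l : ℝ) + σ) ^ (1 - α) - ((l : ℝ) - 1 + σ) ^ (1 - α)

/-- The coefficients `b_l^{(α,σ)}` of the L2-1_σ formula (for `l ≥ 1`). -/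
noncomputable def bCoeff (α σ : ℝ) (l : ℕ) : ℝ :=
  (1 / (2 - α)) * (((l : ℝ) + σ) ^ (2 - α) - ((l : ℝ) - 1 + σ) ^ (2 - α)) -
    (1 / 2) * (((l : ℝ) + σ) ^ (1 - α) + ((l : ℝ) - 1 + σ) ^ (1 - α))

/-- The coefficients `c_s^{(α,σ)}` (for `0 ≤ s ≤ j`) of the L2-1_σ formula:
`c_0 = a_0` if `j = 0`; for `j ≥ 1`, `c_0 = a_0 + b_1`,
`c_s = a_s + b_{s+1} − b_s` for `1 ≤ s ≤ j−1`, and `c_j = a_j − b_j`. -/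
noncomputable def cCoeff (α σ : ℝ) (j s : ℕ) : ℝ :=
  if j = 0 then σ ^ (1 - α)
  else if s = 0 then aCoeff α σ 0 + bCoeff α σ 1
  else if s < j then aCoeff α σ s + bCoeff α σ (s + 1) - bCoeff α σ s
  else aCoeff α σ s - bCoeff α σ s

/-!
Put `β = 1 - α`, so that `σ = (β + 1) / 2`, and for `s ≥ 1` put `x = s - 1 + σ`. Then
`a_s = (x + 1)^β - x^β`, and `b_s` is the error `T(x)` (`rpowTrapezoidError β x`) of the
trapezoidal rule for `∫_x^{x+1} y^β dy`, positive because `y^β` is strictly concave. Hence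
`c_s = g(x) := (x + 1)^β - x^β + T(x + 1) - T(x)` (`interiorCoeff β x`) for `0 < s < j`, and
`c_j = g(x) - T(x + 1) ≤ g(x)`.

The difference `g(x) - g(x + 1)` is `½ Δ³[y^β](x) - (β + 1)⁻¹ Δ³[y^(β+1)](x)`. A third difference
has the sign of the third derivative, positive for `y^β` and negative for `y^(β+1)`: it is the
second difference of `(y + 1)^e - y^e`, which is strictly convex or concave accordingly.
Finally `β + 1 = 2σ` makes `c_0 - g(σ) = (3 (σ + 1)^β - 2 (σ + 2)^β) / (2σ)`, which is positive by
Bernoulli's inequality `(1 + 1/(σ + 1))^β ≤ 1 + β/(σ + 1)`.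
-/

open Real Set

lemma hasDerivAt_rpow_add_one_sub_rpow (e : ℝ) {x : ℝ} (hx : 0 < x) :
    HasDerivAt (fun y : ℝ => (y + 1) ^ e - y ^ e) (e * ((x + 1) ^ (e - 1) - x ^ (e - 1))) x := by
  have h₁ := ((hasDerivAt_id x).add_const 1).rpow_const (p := e) (Or.inl (add_pos hx one_pos).ne')
  exact (h₁.sub (hasDerivAt_rpow_const (Or.inl hx.ne'))).congr_deriv (by simp only [id]; ring)

lemma strictMonoOn_mul_rpow_add_one_sub_rpow {K e : ℝ} (he : e < 1) (hKe : K * e < 0) :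
    StrictMonoOn (fun x : ℝ => K * ((x + 1) ^ e - x ^ e)) (Ioi 0) := by
  have hderiv (x : ℝ) (hx : 0 < x) := (hasDerivAt_rpow_add_one_sub_rpow e hx).const_mul K
  refine strictMonoOn_of_deriv_pos (convex_Ioi 0)
    (fun x hx => (hderiv x hx).continuousAt.continuousWithinAt) fun x hx => ?_
  rw [interior_Ioi] at hx
  rw [(hderiv x hx).deriv, ← mul_assoc]
  exact mul_pos_of_neg_of_neg hKe
    (sub_neg.2 (rpow_lt_rpow_of_neg hx (lt_add_one x) (by linarith)))

lemma strictConvexOn_mul_rpow_add_one_sub_rpow {K e : ℝ} (he : e < 2)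
    (hKe : K * e * (e - 1) < 0) :
    StrictConvexOn ℝ (Ioi 0) (fun x : ℝ => K * ((x + 1) ^ e - x ^ e)) := by
  have hderiv (x : ℝ) (hx : 0 < x) := (hasDerivAt_rpow_add_one_sub_rpow e hx).const_mul K
  refine StrictMonoOn.strictConvexOn_of_deriv (convex_Ioi 0)
    (fun x hx => (hderiv x hx).continuousAt.continuousWithinAt) ?_
  rw [interior_Ioi]
  refine (strictMonoOn_mul_rpow_add_one_sub_rpow (K := K * e) (by linarith) hKe).congr
    fun x hx => ?_
  exact ((hderiv x hx).deriv.trans (mul_assoc K e _).symm).symm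

lemma StrictConvexOn.second_difference_pos {s : Set ℝ} {f : ℝ → ℝ}
    (hf : StrictConvexOn ℝ s f) {x h : ℝ} (hx : x ∈ s) (hx₂ : x + 2 * h ∈ s) (hh : h ≠ 0) :
    0 < f x - 2 * f (x + h) + f (x + 2 * h) := by
  have hmid := hf.2 hx hx₂ (by simpa using hh) one_half_pos one_half_pos (add_halves 1)
  simp only [smul_eq_mul] at hmid
  rw [show 1 / 2 * x + 1 / 2 * (x + 2 * h) = x + h by ring] at hmid
  linarith

lemma third_difference_mul_rpow_pos {K e t : ℝ} (he : e < 2) (hKe : K * e * (e - 1) < 0)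
    (ht : 0 < t) : 0 < K * ((t + 3) ^ e - 3 * (t + 2) ^ e + 3 * (t + 1) ^ e - t ^ e) := by
  have := (strictConvexOn_mul_rpow_add_one_sub_rpow he hKe).second_difference_pos
    (x := t) (h := 1) ht (by simp only [mem_Ioi]; linarith) one_ne_zero
  rw [show t + 2 * 1 = t + 2 by ring, show t + 1 + 1 = t + 2 by ring,
    show t + 2 + 1 = t + 3 by ring] at this
  linarith

lemma mul_rpow_sub_one_mul_lt_rpow_sub_rpow {β x y : ℝ} (hβ0 : 0 < β) (hβ1 : β < 1)
    (hx : 0 ≤ x) (hxy : x < y) : β * y ^ (β - 1) * (y - x) < y ^ β - x ^ β := by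
  have h := (strictConcaveOn_rpow hβ0 hβ1).neg.slope_lt_of_hasDerivAt hx (hx.trans hxy.le) hxy
    (hasDerivAt_rpow_const (Or.inl (hx.trans_lt hxy).ne')).neg
  rw [slope_def_field, div_lt_iff₀ (sub_pos.2 hxy)] at h
  simp only [Pi.neg_apply] at h
  linarith

noncomputable def rpowTrapezoidError (β x : ℝ) : ℝ :=
  1 / (β + 1) * ((x + 1) ^ (β + 1) - x ^ (β + 1)) - 1 / 2 * ((x + 1) ^ β + x ^ β)

lemma rpowTrapezoidError_pos {β x : ℝ} (hβ0 : 0 < β) (hβ1 : β < 1) (hx : 0 < x) :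
    0 < rpowTrapezoidError β x := by
  set E : ℝ → ℝ := fun y =>
    1 / (β + 1) * (y ^ (β + 1) - x ^ (β + 1)) - (y - x) * ((y ^ β + x ^ β) / 2)
  have hE (y : ℝ) (hy : 0 < y) :
      HasDerivAt E (((y ^ β - x ^ β) - β * y ^ (β - 1) * (y - x)) / 2) y := by
    have h₁ := ((hasDerivAt_rpow_const (p := β + 1) (Or.inl hy.ne')).sub_const
      (x ^ (β + 1))).const_mul (1 / (β + 1))
    have h₂ := ((hasDerivAt_id y).sub_const x).mul
      (((hasDerivAt_rpow_const (p := β) (Or.inl hy.ne')).add_const (x ^ β)).div_const 2)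
    refine (h₁.sub h₂).congr_deriv ?_
    rw [add_sub_cancel_right, id]
    field_simp
    ring
  obtain ⟨c, hc, hEc⟩ := exists_hasDerivAt_eq_slope E _ (lt_add_one x)
    (fun y hy => (hE y (hx.trans_le hy.1)).continuousAt.continuousWithinAt)
    (fun y hy => hE y (hx.trans hy.1))
  have hE₁ : E (x + 1) = rpowTrapezoidError β x := by
    simp only [E, rpowTrapezoidError]
    ring
  have hE₀ : E x = 0 := by simp [E]
  rw [hE₁, hE₀, sub_zero, add_sub_cancel_left, div_one] at hEc
  rw [← hEc]
  linarith [mul_rpow_sub_one_mul_lt_rpow_sub_rpow hβ0 hβ1 hx.le hc.1]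

lemma two_mul_rpow_add_two_lt_three_mul_rpow_add_one {β σ : ℝ} (hβ0 : 0 ≤ β)
    (hβ1 : β ≤ 1) (h : 2 * β < σ + 1) : 2 * (σ + 2) ^ β < 3 * (σ + 1) ^ β := by
  have hu : 0 < σ + 1 := by linarith
  have hsplit : (σ + 2) ^ β = (σ + 1) ^ β * (1 + 1 / (σ + 1)) ^ β := by
    rw [← mul_rpow hu.le (by positivity)]
    congr 1
    field_simp
    ring
  have hbernoulli := rpow_one_add_le_one_add_mul_self
    (by linarith [one_div_pos.2 hu] : -1 ≤ 1 / (σ + 1)) hβ0 hβ1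
  have hsmall : β * (1 / (σ + 1)) < 1 / 2 := by
    rw [mul_one_div, div_lt_iff₀ hu]
    linarith
  rw [hsplit]
  nlinarith [rpow_pos_of_pos hu β]

noncomputable def interiorCoeff (β x : ℝ) : ℝ :=
  (x + 1) ^ β - x ^ β + rpowTrapezoidError β (x + 1) - rpowTrapezoidError β x

lemma interiorCoeff_add_one_lt {β t : ℝ} (hβ0 : 0 < β) (hβ1 : β < 1) (ht : 0 < t) :
    interiorCoeff β (t + 1) < interiorCoeff β t := by
  have h₁ := third_difference_mul_rpow_pos (K := 1 / 2) (e := β) (by linarith) (by nlinarith) ht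
  have h₂ := third_difference_mul_rpow_pos (K := -(1 / (β + 1))) (e := β + 1) (by linarith)
    (by field_simp; linarith) ht
  have key : interiorCoeff β t - interiorCoeff β (t + 1) =
      1 / 2 * ((t + 3) ^ β - 3 * (t + 2) ^ β + 3 * (t + 1) ^ β - t ^ β) +
      -(1 / (β + 1)) * ((t + 3) ^ (β + 1) - 3 * (t + 2) ^ (β + 1) + 3 * (t + 1) ^ (β + 1) -
        t ^ (β + 1)) := by
    simp only [interiorCoeff, rpowTrapezoidError]
    rw [show t + 1 + 1 = t + 2 by ring, show t + 2 + 1 = t + 3 by ring]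
    ring
  linarith

lemma interiorCoeff_lt_rpow_add_rpowTrapezoidError {β σ : ℝ} (hβ0 : 0 < β) (hβ1 : β < 1)
    (hσ : σ = (β + 1) / 2) : interiorCoeff β σ < σ ^ β + rpowTrapezoidError β σ := by
  have hσ0 : 0 < σ := by linarith
  have key : σ ^ β + rpowTrapezoidError β σ - interiorCoeff β σ =
      (3 * (σ + 1) ^ β - 2 * (σ + 2) ^ β) / (2 * σ) := by
    simp only [interiorCoeff, rpowTrapezoidError]
    rw [show σ + 1 + 1 = σ + 2 by ring, rpow_add_one hσ0.ne',
      rpow_add_one (by linarith : σ + 1 ≠ 0), rpow_add_one (by linarith : σ + 2 ≠ 0),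
      show β + 1 = 2 * σ by linarith]
    field_simp
    ring
  have hbound := two_mul_rpow_add_two_lt_three_mul_rpow_add_one (σ := σ) hβ0.le hβ1.le
    (by linarith)
  have := div_pos (sub_pos.2 hbound) (by linarith : 0 < 2 * σ)
  linarith

lemma bCoeff_eq_rpowTrapezoidError (α σ : ℝ) (l : ℕ) :
    bCoeff α σ l = rpowTrapezoidError (1 - α) ((l : ℝ) - 1 + σ) := by
  rw [bCoeff, rpowTrapezoidError, show 1 - α + 1 = 2 - α by ring,
    show (l : ℝ) - 1 + σ + 1 = l + σ by ring]

lemma cCoeff_zero {α σ : ℝ} {j : ℕ} (hj : j ≠ 0) :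
    cCoeff α σ j 0 = σ ^ (1 - α) + rpowTrapezoidError (1 - α) σ := by
  rw [cCoeff, if_neg hj, if_pos rfl, aCoeff, if_pos rfl, bCoeff_eq_rpowTrapezoidError,
    Nat.cast_one, sub_self, zero_add]

lemma cCoeff_of_lt {α σ : ℝ} {j s : ℕ} (hs : s ≠ 0) (hsj : s < j) :
    cCoeff α σ j s = interiorCoeff (1 - α) ((s : ℝ) - 1 + σ) := by
  rw [cCoeff, if_neg (by omega : j ≠ 0), if_neg hs, if_pos hsj, aCoeff, if_neg hs,
    bCoeff_eq_rpowTrapezoidError, bCoeff_eq_rpowTrapezoidError, interiorCoeff, Nat.cast_succ,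
    show (s : ℝ) - 1 + σ + 1 = s + σ by ring, add_sub_cancel_right]

lemma cCoeff_self {α σ : ℝ} {j : ℕ} (hj : j ≠ 0) :
    cCoeff α σ j j = interiorCoeff (1 - α) ((j : ℝ) - 1 + σ) -
      rpowTrapezoidError (1 - α) ((j : ℝ) - 1 + σ + 1) := by
  rw [cCoeff, if_neg hj, if_neg hj, if_neg (lt_irrefl j), aCoeff, if_neg hj,
    bCoeff_eq_rpowTrapezoidError, interiorCoeff, show (j : ℝ) - 1 + σ + 1 = j + σ by ring]
  ring

lemma cCoeff_le_interiorCoeff {α σ x : ℝ} {j s : ℕ} (hα0 : 0 < α) (hα1 : α < 1)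
    (hx : 0 < x) (hs : s ≠ 0) (hsj : s ≤ j) (hsx : (s : ℝ) - 1 + σ = x) :
    cCoeff α σ j s ≤ interiorCoeff (1 - α) x := by
  subst hsx
  rcases hsj.lt_or_eq with hsj | rfl
  · exact (cCoeff_of_lt hs hsj).le
  · rw [cCoeff_self hs, sub_le_self_iff]
    exact (rpowTrapezoidError_pos (by linarith) (by linarith) (by linarith)).le

theorem c_coeff_strict_decreasing (α σ : ℝ) (hα0 : 0 < α) (hα1 : α < 1)
    (hσ : σ = 1 - α / 2) (j : ℕ) :
    ∀ s < j, cCoeff α σ j (s + 1) < cCoeff α σ j s := by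
  intro s hs
  have hσ0 : 0 < σ := by linarith
  rcases Nat.eq_zero_or_pos s with rfl | hs0
  · rw [cCoeff_zero (by omega)]
    calc cCoeff α σ j (0 + 1) ≤ interiorCoeff (1 - α) σ :=
          cCoeff_le_interiorCoeff hα0 hα1 hσ0 one_ne_zero hs (by simp)
      _ < σ ^ (1 - α) + rpowTrapezoidError (1 - α) σ :=
          interiorCoeff_lt_rpow_add_rpowTrapezoidError (by linarith) (by linarith) (by linarith)
  · have ht : 0 < (s : ℝ) - 1 + σ := by
      have : (1 : ℝ) ≤ s := by exact_mod_cast hs0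
      linarith
    rw [cCoeff_of_lt hs0.ne' hs]
    calc cCoeff α σ j (s + 1) ≤ interiorCoeff (1 - α) ((s : ℝ) - 1 + σ + 1) :=
          cCoeff_le_interiorCoeff hα0 hα1 (by linarith) (by omega) hs (by push_cast; ring)
      _ < interiorCoeff (1 - α) ((s : ℝ) - 1 + σ) :=
          interiorCoeff_add_one_lt (by linarith) (by linarith) ht
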